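/- (Limit of the principal eigenvalue on long intervals) Let a0 > 0 be a constant. Then λ_p(ℓ) := λ_p(L_{(0,ℓ)} + a0) satisfies λ_p(ℓ) ≤ a0 for all ℓ > 0, and λ_p(ℓ) → a0 as ℓ → +∞. -/

import Mathlib

/-!
The constant test function `φ ≡ 1` gives `λ_p(ℓ) ≤ a0`, because `∫₀^ℓ J(x - y) dy ≤ ∫ J = 1`.
Conversely, if `(L + a0)φ ≤ λφ` with `φ > 0`, divide by `φ(x)` and integrate over `(0, ℓ)`:
since `J` is even and `φ(y)/φ(x) + φ(x)/φ(y) ≥ 2`, the double integral of `J(x - y) φ(y)/φ(x)`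
dominates that of `J(x - y)`, so `λ ≥ a0 - d + (d/ℓ) ∫∫_{(0,ℓ)²} J(x - y)`. For `x ∈ [m, ℓ - m]`
the inner integral is at least `∫_{-m}^m J`, hence `λ ≥ a0 - d + d (1 - 2m/ℓ) ∫_{-m}^m J`,
which exceeds any `b < a0` once `m` and then `ℓ` are large.
-/

open MeasureTheory Set Filter Topology

/-- The principal eigenvalue `λ_p(L_{(l1,l2)} + a)` of the nonlocal operator
`φ ↦ d(∫_{l1}^{l2} J(x-y) φ(y) dy − φ(x)) + a φ(x)` on `[l1, l2]`, defined as the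
infimum of the set of `λ` admitting a positive continuous test function `φ` with
`(L + a)[φ] ≤ λ φ` on `[l1, l2]`. -/
noncomputable def lambdaP (d : ℝ) (J : ℝ → ℝ) (l1 l2 a : ℝ) : ℝ :=
  sInf {lam : ℝ | ∃ φ : ℝ → ℝ, ContinuousOn φ (Set.Icc l1 l2) ∧
    (∀ x ∈ Set.Icc l1 l2, 0 < φ x) ∧
    ∀ x ∈ Set.Icc l1 l2,
      d * ((∫ y in l1..l2, J (x - y) * φ y) - φ x) + a * φ x ≤ lam * φ x}

theorem integral_le_integral_mul_div_of_symm {α : Type*} [MeasurableSpace α] {μ : Measure α}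
    [SFinite μ] {K : α × α → ℝ} {ψ : α → ℝ} (hK0 : 0 ≤ K) (hKsymm : ∀ p, K p.swap = K p)
    (hψ : ∀ x, 0 < ψ x) (hK : Integrable K (μ.prod μ))
    (hKψ : Integrable (fun p => K p * ψ p.2 / ψ p.1) (μ.prod μ)) :
    ∫ p, K p ∂μ.prod μ ≤ ∫ p, K p * ψ p.2 / ψ p.1 ∂μ.prod μ := by
  set f := fun p : α × α => K p * ψ p.2 / ψ p.1
  have hKψswap : Integrable (fun p => f p.swap) (μ.prod μ) := hKψ.swap
  -- AM-GM: `ψ y / ψ x + ψ x / ψ y ≥ 2`, and `K` is symmetric.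
  have amgm : ∀ p, K p ≤ (f p + f p.swap) / 2 := fun p => by
    have hψ1 := hψ p.1
    have hψ2 := hψ p.2
    have hdiff : (f p + f p.swap) / 2 - K p = K p * (ψ p.1 - ψ p.2) ^ 2 / (2 * ψ p.1 * ψ p.2) := by
      simp only [f, Prod.fst_swap, Prod.snd_swap, hKsymm]
      field_simp
      ring
    have hdiff_nonneg : 0 ≤ K p * (ψ p.1 - ψ p.2) ^ 2 / (2 * ψ p.1 * ψ p.2) :=
      div_nonneg (mul_nonneg (hK0 p) (sq_nonneg _)) (by positivity)
    linarith
  calc ∫ p, K p ∂μ.prod μ ≤ ∫ p, (f p + f p.swap) / 2 ∂μ.prod μ :=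
        integral_mono hK ((hKψ.add hKψswap).div_const 2) amgm
    _ = ∫ p, f p ∂μ.prod μ := by
        rw [integral_div, integral_add hKψ hKψswap, integral_prod_swap f]
        ring

theorem intervalIntegral_le_integral {f : ℝ → ℝ} (hf : Integrable f) (hf0 : 0 ≤ f) {a b : ℝ}
    (hab : a ≤ b) : ∫ x in a..b, f x ≤ ∫ x, f x := by
  rw [intervalIntegral.integral_of_le hab]
  exact setIntegral_le_integral hf (Eventually.of_forall hf0)

theorem Continuous.integrable_prod_restrict_Ioc {g : ℝ × ℝ → ℝ} (hg : Continuous g)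
    (l1 l2 : ℝ) :
    Integrable g ((volume.restrict (Ioc l1 l2)).prod (volume.restrict (Ioc l1 l2))) := by
  rw [Measure.prod_restrict, ← Measure.volume_eq_prod]
  exact (hg.continuousOn.integrableOn_compact (isCompact_Icc.prod isCompact_Icc)).mono_set
    (prod_mono Ioc_subset_Icc_self Ioc_subset_Icc_self)

variable {J : ℝ → ℝ} {d a l1 l2 : ℝ}

noncomputable def lambdaPSet (d : ℝ) (J : ℝ → ℝ) (l1 l2 a : ℝ) : Set ℝ :=
  {lam : ℝ | ∃ φ : ℝ → ℝ, ContinuousOn φ (Set.Icc l1 l2) ∧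
    (∀ x ∈ Set.Icc l1 l2, 0 < φ x) ∧
    ∀ x ∈ Set.Icc l1 l2,
      d * ((∫ y in l1..l2, J (x - y) * φ y) - φ x) + a * φ x ≤ lam * φ x}

noncomputable def kernelMass (J : ℝ → ℝ) (l1 l2 : ℝ) : ℝ :=
  ∫ x in l1..l2, ∫ y in l1..l2, J (x - y)

theorem mem_lambdaPSet_self (hJnn : ∀ x, 0 ≤ J x) (hJint : Integrable J)
    (hJ1 : (∫ x, J x) = 1) (hd : 0 ≤ d) (hl : l1 ≤ l2) : a ∈ lambdaPSet d J l1 l2 a := by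
  refine ⟨fun _ => 1, continuousOn_const, fun _ _ => one_pos, fun x _ => ?_⟩
  have hmass : ∫ y in l1..l2, J (x - y) * 1 ≤ 1 := by
    simp only [mul_one, intervalIntegral.integral_comp_sub_left J x]
    exact hJ1 ▸ intervalIntegral_le_integral hJint hJnn (by linarith)
  nlinarith

theorem kernelMass_eq_integral_prod (hJc : Continuous J) (hl : l1 ≤ l2) :
    kernelMass J l1 l2 =
      ∫ p, J (p.1 - p.2) ∂(volume.restrict (Ioc l1 l2)).prod (volume.restrict (Ioc l1 l2)) := by
  simp only [kernelMass, intervalIntegral.integral_of_le hl]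
  exact (integral_prod _ ((hJc.comp continuous_sub).integrable_prod_restrict_Ioc l1 l2)).symm

theorem le_of_mem_lambdaPSet (hJc : Continuous J) (hJnn : ∀ x, 0 ≤ J x)
    (hJeven : ∀ x, J (-x) = J x) (hd : 0 ≤ d) (hl : l1 < l2) {lam : ℝ}
    (hlam : lam ∈ lambdaPSet d J l1 l2 a) :
    a - d + d * (kernelMass J l1 l2 / (l2 - l1)) ≤ lam := by
  obtain ⟨φ, hφc, hφpos, hφ⟩ := hlam
  set ψ : ℝ → ℝ := fun x => φ (projIcc l1 l2 hl.le x)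
  have hψc : Continuous ψ :=
    hφc.comp_continuous (continuous_subtype_val.comp continuous_projIcc) fun x =>
      (projIcc _ _ _ x).2
  have hψpos : ∀ x, 0 < ψ x := fun x => hφpos _ (projIcc _ _ _ x).2
  set μ := volume.restrict (Ioc l1 l2)
  set c := lam - a + d
  have hrow : ∀ x ∈ Ioc l1 l2, d * ∫ y, J (x - y) * ψ y / ψ x ∂μ ≤ c := by
    intro x hx
    have hxI := Ioc_subset_Icc_self hx
    have hψx : ψ x = φ x := by simp only [ψ, projIcc_of_mem _ hxI]
    have h1 : ∫ y in l1..l2, J (x - y) * φ y = ∫ y, J (x - y) * ψ y ∂μ := by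
      rw [intervalIntegral.integral_of_le hl.le]
      refine setIntegral_congr_fun measurableSet_Ioc fun y hy => ?_
      simp only [ψ, projIcc_of_mem _ (Ioc_subset_Icc_self hy)]
    have h2 := hφ x hxI
    rw [h1, ← hψx] at h2
    rw [integral_div, mul_div_assoc', div_le_iff₀ (hψpos x)]
    linarith
  have hKint : Integrable (fun p : ℝ × ℝ => J (p.1 - p.2)) (μ.prod μ) :=
    (hJc.comp continuous_sub).integrable_prod_restrict_Ioc l1 l2
  have hfint : Integrable (fun p : ℝ × ℝ => J (p.1 - p.2) * ψ p.2 / ψ p.1) (μ.prod μ) :=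
    (Continuous.div (by fun_prop) (by fun_prop) fun p => (hψpos _).ne').integrable_prod_restrict_Ioc
      l1 l2
  have hsymm := integral_le_integral_mul_div_of_symm (fun p => hJnn _)
    (fun p => by rw [Prod.fst_swap, Prod.snd_swap, ← hJeven, neg_sub]) hψpos hKint hfint
  have htotal : d * kernelMass J l1 l2 ≤ c * (l2 - l1) := by
    calc d * kernelMass J l1 l2 = d * ∫ p, J (p.1 - p.2) ∂μ.prod μ := by
          rw [kernelMass_eq_integral_prod hJc hl.le]
      _ ≤ d * ∫ p, J (p.1 - p.2) * ψ p.2 / ψ p.1 ∂μ.prod μ :=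
          mul_le_mul_of_nonneg_left hsymm hd
      _ = ∫ x in Ioc l1 l2, d * ∫ y, J (x - y) * ψ y / ψ x ∂μ := by
          rw [integral_prod _ hfint, integral_const_mul]
      _ ≤ ∫ x in Ioc l1 l2, c :=
          setIntegral_mono_on (hfint.integral_prod_left.const_mul d)
            (integrableOn_const (by simp)) measurableSet_Ioc hrow
      _ = c * (l2 - l1) := by simp [hl.le, mul_comm]
  have hmean : d * (kernelMass J l1 l2 / (l2 - l1)) ≤ c := by
    rw [← mul_div_assoc, div_le_iff₀ (sub_pos.2 hl)]
    exact htotal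
  linarith

theorem sub_mul_integral_le_kernelMass (hJc : Continuous J) (hJnn : ∀ x, 0 ≤ J x) {m : ℝ}
    (hm : 0 ≤ m) (hl : l1 + 2 * m ≤ l2) :
    (l2 - l1 - 2 * m) * ∫ u in -m..m, J u ≤ kernelMass J l1 l2 := by
  set F : ℝ → ℝ := fun x => ∫ y in l1..l2, J (x - y)
  have hFc : Continuous F :=
    intervalIntegral.continuous_parametric_intervalIntegral_of_continuous' (by fun_prop) l1 l2
  have hF : ∀ x ∈ Icc (l1 + m) (l2 - m), ∫ u in -m..m, J u ≤ F x := fun x hx => by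
    simp only [F, intervalIntegral.integral_comp_sub_left J x]
    exact intervalIntegral.integral_mono_interval (by linarith [hx.2]) (by linarith)
      (by linarith [hx.1]) (Eventually.of_forall hJnn) (hJc.intervalIntegrable _ _)
  calc (l2 - l1 - 2 * m) * ∫ u in -m..m, J u = ∫ _ in l1 + m..l2 - m, ∫ u in -m..m, J u := by
        rw [intervalIntegral.integral_const, smul_eq_mul]
        ring
    _ ≤ ∫ x in l1 + m..l2 - m, F x :=
        intervalIntegral.integral_mono_on (by linarith) intervalIntegrable_const
          (hFc.intervalIntegrable _ _) hF
    _ ≤ kernelMass J l1 l2 :=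
        intervalIntegral.integral_mono_interval (by linarith) (by linarith) (by linarith)
          (Eventually.of_forall fun x => intervalIntegral.integral_nonneg (by linarith)
            fun y _ => hJnn _) (hFc.intervalIntegrable _ _)

theorem bddBelow_lambdaPSet (hJc : Continuous J) (hJnn : ∀ x, 0 ≤ J x)
    (hJeven : ∀ x, J (-x) = J x) (hd : 0 ≤ d) (hl : l1 < l2) :
    BddBelow (lambdaPSet d J l1 l2 a) :=
  ⟨_, fun _ => le_of_mem_lambdaPSet hJc hJnn hJeven hd hl⟩

theorem lambdaP_le_self (hJc : Continuous J) (hJnn : ∀ x, 0 ≤ J x)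
    (hJeven : ∀ x, J (-x) = J x) (hJint : Integrable J) (hJ1 : (∫ x, J x) = 1) (hd : 0 ≤ d)
    (hl : l1 < l2) : lambdaP d J l1 l2 a ≤ a :=
  csInf_le (bddBelow_lambdaPSet hJc hJnn hJeven hd hl)
    (mem_lambdaPSet_self hJnn hJint hJ1 hd hl.le)

theorem le_lambdaP (hJc : Continuous J) (hJnn : ∀ x, 0 ≤ J x)
    (hJeven : ∀ x, J (-x) = J x) (hJint : Integrable J) (hJ1 : (∫ x, J x) = 1) (hd : 0 ≤ d)
    {m : ℝ} (hm : 0 < m) (hl : l1 + 2 * m ≤ l2) :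
    a - d + d * ((1 - 2 * m / (l2 - l1)) * ∫ u in -m..m, J u) ≤ lambdaP d J l1 l2 a := by
  have hlen : 0 < l2 - l1 := by linarith
  refine le_csInf ⟨a, mem_lambdaPSet_self hJnn hJint hJ1 hd (by linarith)⟩ fun lam hlam => ?_
  refine le_trans ?_ (le_of_mem_lambdaPSet hJc hJnn hJeven hd (by linarith) hlam)
  gcongr
  rw [le_div_iff₀ hlen, one_sub_div hlen.ne', div_mul_eq_mul_div, div_mul_cancel₀ _ hlen.ne']
  exact sub_mul_integral_le_kernelMass hJc hJnn hm.le hl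

theorem lambdaP_limit_long_intervals_general
    (J : ℝ → ℝ) (hJc : Continuous J) (hJnn : ∀ x, 0 ≤ J x)
    (hJeven : ∀ x, J (-x) = J x)
    (hJint : Integrable J) (hJ1 : (∫ x, J x) = 1)
    (d : ℝ) (hd : 0 < d) (a0 : ℝ) :
    (∀ l : ℝ, 0 < l → lambdaP d J 0 l a0 ≤ a0) ∧
    Filter.Tendsto (fun l => lambdaP d J 0 l a0) Filter.atTop (nhds a0) := by
  have hle : ∀ l : ℝ, 0 < l → lambdaP d J 0 l a0 ≤ a0 :=
    fun l hl => lambdaP_le_self hJc hJnn hJeven hJint hJ1 hd.le hl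
  refine ⟨hle, tendsto_order.2 ⟨fun b hb => ?_, fun b hb =>
    (eventually_gt_atTop 0).mono fun l hl => (hle l hl).trans_lt hb⟩⟩
  set c : ℝ → ℝ := fun m => ∫ u in -m..m, J u
  have hc : Tendsto (fun m => a0 - d + d * c m) atTop (𝓝 a0) := by
    have := intervalIntegral_tendsto_integral hJint tendsto_neg_atTop_atBot tendsto_id
    simpa [hJ1] using (this.const_mul d).const_add (a0 - d)
  obtain ⟨m, hbm, hm⟩ := ((hc.eventually (lt_mem_nhds hb)).and (eventually_gt_atTop 0)).exists
  have hlong : Tendsto (fun l => a0 - d + d * ((1 - 2 * m / l) * c m)) atTop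
      (𝓝 (a0 - d + d * c m)) := by
    simpa using ((tendsto_const_nhds.div_atTop tendsto_id).const_sub 1 |>.mul_const (c m)
      |>.const_mul d |>.const_add (a0 - d))
  filter_upwards [hlong.eventually (lt_mem_nhds hbm), eventually_ge_atTop (2 * m)] with l hl h2m
  have h := le_lambdaP hJc hJnn hJeven hJint hJ1 hd.le (a := a0) (l1 := 0) (l2 := l) hm
    (by linarith)
  rw [sub_zero] at h
  exact hl.trans_le h

/-- **Limit of the principal eigenvalue on long intervals**
(Proposition 3.4(ii) of Cao–Du–Li–Li). -/
theorem lambdaP_limit_long_intervals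
    (J : ℝ → ℝ) (hJc : Continuous J) (hJnn : ∀ x, 0 ≤ J x)
    (hJeven : ∀ x, J (-x) = J x) (hJbdd : BddAbove (Set.range J))
    (hJ0 : 0 < J 0) (hJint : Integrable J) (hJ1 : (∫ x, J x) = 1)
    (d : ℝ) (hd : 0 < d) (a0 : ℝ) (ha0 : 0 < a0) :
    (∀ l : ℝ, 0 < l → lambdaP d J 0 l a0 ≤ a0) ∧
    Filter.Tendsto (fun l => lambdaP d J 0 l a0) Filter.atTop (nhds a0) :=
  lambdaP_limit_long_intervals_general J hJc hJnn hJeven hJint hJ1 d hd a0
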